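/- arXiv:cs/0603006 — 8 statements merged into one kernel-verified Lean document; each statement's English description precedes it below -/
import Mathlib

section
/- Let 𝒱 be a set, 𝐕, 𝐖 ⊆ P(𝒱), and μ a choice function from 𝐕 to 𝐖. Then μ is strongly coherent if and only if there exists a pivot I on 𝒱 such that for all V ∈ 𝐕, μ(V) = μ_I(V) (i.e. μ(V) = V ∩ I). -/
/-- A choice function `μ` from `𝐕` to `𝐖` is strongly coherent iff
there exists a pivot `I` on `𝒱` such that `μ(V) = V ∩ I` for all `V ∈ 𝐕`. -/
theorem stmt0 {V : Type*} (VV WW : Set (Set V)) (μ : Set V → Set V)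
    (hmem : ∀ A ∈ VV, μ A ∈ WW) (hch : ∀ A ∈ VV, μ A ⊆ A) :
    (∀ A ∈ VV, ∀ B ∈ VV, μ B ∩ A ⊆ μ A) ↔
      ∃ I : Set V, ∀ A ∈ VV, μ A = A ∩ I := by
  constructor
  · intro hsc
    refine ⟨⋃ B ∈ VV, μ B, fun A hA => ?_⟩
    apply Set.Subset.antisymm
    · intro x hx
      exact ⟨hch A hA hx, Set.mem_biUnion hA hx⟩
    · rintro x ⟨hxA, hxI⟩
      obtain ⟨B, hB, hxB⟩ := Set.mem_iUnion₂.mp hxI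
      exact hsc A hA B hB ⟨hxB, hxA⟩
  · rintro ⟨I, hI⟩ A hA B hB x ⟨hxB, hxA⟩
    rw [hI B hB] at hxB
    rw [hI A hA]
    exact ⟨hxA, hxB.2⟩
end

section
/- Let ⟨F, 𝒱, ⊨⟩ be a semantic structure, 𝐕, 𝐖 ⊆ P(𝒱) with 𝒱 ∈ 𝐕, and μ a choice function from 𝐕 to 𝐖. Then μ is strongly coherent and definability preserving if and only if there exists a pivot I on 𝒱 such that I ∈ D and for all V ∈ 𝐕, μ(V) = V ∩ I. -/
/-- The set of models of a set of formulas `Γ`. -/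
def modSet {F V : Type*} (sat : V → F → Prop) (Γ : Set F) : Set V :=
  {v | ∀ α ∈ Γ, sat v α}

/-- `D`: the family of definable sets of valuations. -/
def defFam {F V : Type*} (sat : V → F → Prop) : Set (Set V) :=
  {S | ∃ Γ : Set F, modSet sat Γ = S}

/-- Let `⟨F, 𝒱, ⊨⟩` be a semantic structure, `𝒱 ∈ 𝐕`, and `μ` a choice
function from `𝐕` to `𝐖`. Then `μ` is strongly coherent and definability preserving iff
there exists a pivot `I` with `I ∈ D` such that `μ(V) = V ∩ I` for all `V ∈ 𝐕`. -/
theorem stmt1 {F V : Type*} (sat : V → F → Prop)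
    (VV WW : Set (Set V)) (hV : Set.univ ∈ VV)
    (μ : Set V → Set V) (hmem : ∀ A ∈ VV, μ A ∈ WW) (hch : ∀ A ∈ VV, μ A ⊆ A) :
    ((∀ A ∈ VV, ∀ B ∈ VV, μ B ∩ A ⊆ μ A) ∧
        (∀ A ∈ VV, A ∈ defFam sat → μ A ∈ defFam sat)) ↔
      ∃ I : Set V, I ∈ defFam sat ∧ ∀ A ∈ VV, μ A = A ∩ I := by
  constructor
  · rintro ⟨hsc, hdp⟩
    refine ⟨μ Set.univ, hdp Set.univ hV ⟨∅, by ext v; simp [modSet]⟩, fun A hA => ?_⟩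
    apply Set.Subset.antisymm
    · intro x hx
      exact ⟨hch A hA hx, hsc Set.univ hV A hA ⟨hx, trivial⟩⟩
    · intro x hx
      exact hsc A hA Set.univ hV ⟨hx.2, hx.1⟩
  · rintro ⟨I, ⟨Γ, hΓ⟩, hI⟩
    constructor
    · intro A hA B hB x hx
      rw [hI A hA]; rw [hI B hB] at hx
      exact ⟨hx.2, hx.1.2⟩
    · rintro A hA ⟨Δ, hΔ⟩
      refine ⟨Δ ∪ Γ, ?_⟩
      rw [hI A hA, ← hΓ, ← hΔ]
      ext v; simp [modSet]; aesop
end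

section
/- Let ⟨F, 𝒱, ⊨⟩ be a semantic structure, 𝐕, 𝐖 ⊆ P(𝒱) with 𝒱 ∈ 𝐕, and μ a choice function from 𝐕 to 𝐖. Then μ is strongly coherent and universe-codefinable if and only if there exists a pivot I on 𝒱 such that 𝒱 \ I ∈ D and for all V ∈ 𝐕, μ(V) = V ∩ I. -/
/-- Let `⟨F, 𝒱, ⊨⟩` be a semantic structure, `𝒱 ∈ 𝐕`, and `μ` a choice
function from `𝐕` to `𝐖`. Then `μ` is strongly coherent and universe-codefinable iff
there exists a pivot `I` with `𝒱 \ I ∈ D` such that `μ(V) = V ∩ I` for all `V ∈ 𝐕`. -/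
theorem stmt2 {F V : Type*} (sat : V → F → Prop)
    (VV WW : Set (Set V)) (hV : Set.univ ∈ VV)
    (μ : Set V → Set V) (hmem : ∀ A ∈ VV, μ A ∈ WW) (hch : ∀ A ∈ VV, μ A ⊆ A) :
    ((∀ A ∈ VV, ∀ B ∈ VV, μ B ∩ A ⊆ μ A) ∧
        Set.univ \ μ Set.univ ∈ defFam sat) ↔
      ∃ I : Set V, Set.univ \ I ∈ defFam sat ∧ ∀ A ∈ VV, μ A = A ∩ I := by
  constructor
  · rintro ⟨hsc, huc⟩
    refine ⟨μ Set.univ, huc, fun A hA => ?_⟩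
    apply Set.Subset.antisymm
    · intro x hx
      exact ⟨hch A hA hx, hsc Set.univ hV A hA ⟨hx, trivial⟩⟩
    · intro x hx
      exact hsc A hA Set.univ hV ⟨hx.2, hx.1⟩
  · rintro ⟨I, hI, hμ⟩
    constructor
    · intro A hA B hB x hx
      rw [hμ A hA]
      rw [hμ B hB] at hx
      exact ⟨hx.2, hx.1.2⟩
    · rw [hμ Set.univ hV, Set.univ_inter]
      exact hI
end

section
/- Let ⟨F, 𝒱, ⊨⟩ be a semantic structure and |~ a relation on P(F) × F. Then |~ is a definability preserving pivotal consequence relation if and only if |~ satisfies the following four conditions for all Γ, Δ ⊆ F: (|~0) if C_⊢(Γ) = C_⊢(Δ) then C_|~(Γ) = C_|~(Δ); (|~1) C_|~(Γ) = C_⊢(C_|~(Γ)); (|~2) Γ ⊆ C_|~(Γ); (|~3) C_|~(Γ) ⊆ C_⊢(C_|~(Δ) ∪ Γ). -/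
/-- The set of formulas satisfied in every valuation of `S`. -/
def thSet {F V : Type*} (sat : V → F → Prop) (S : Set V) : Set F :=
  {α | S ⊆ modSet sat {α}}

/-- The basic consequence operator `C_⊢(Γ) = Th(Mod(Γ))`. -/
def cnsq {F V : Type*} (sat : V → F → Prop) (Γ : Set F) : Set F :=
  thSet sat (modSet sat Γ)

/-- `C_|~(Γ) = {α | Γ |~ α}`. -/
def relC {F : Type*} (rel : Set F → F → Prop) (Γ : Set F) : Set F :=
  {α | rel Γ α}

/-- `|~` is a definability preserving pivotal consequence relation: there is a strongly
coherent, definability preserving choice function `μ` from `D` to `P(𝒱)` defining it. -/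
def isPivotalDP {F V : Type*} (sat : V → F → Prop) (rel : Set F → F → Prop) : Prop :=
  ∃ μ : Set V → Set V,
    (∀ A ∈ defFam sat, μ A ⊆ A) ∧
    (∀ A ∈ defFam sat, ∀ B ∈ defFam sat, μ B ∩ A ⊆ μ A) ∧
    (∀ A ∈ defFam sat, μ A ∈ defFam sat) ∧
    (∀ (Γ : Set F) (α : F), rel Γ α ↔ μ (modSet sat Γ) ⊆ modSet sat {α})

section Aux

variable {F V : Type*} (sat : V → F → Prop)

lemma mem_thSet_iff {S : Set V} {α : F} : α ∈ thSet sat S ↔ ∀ v ∈ S, sat v α := by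
  constructor
  · intro h v hv
    exact h hv α rfl
  · intro h v hv β hβ
    cases hβ
    exact h v hv

lemma modSet_anti {Γ Δ : Set F} (h : Γ ⊆ Δ) : modSet sat Δ ⊆ modSet sat Γ :=
  fun v hv α hα => hv α (h hα)

lemma thSet_anti {S T : Set V} (h : S ⊆ T) : thSet sat T ⊆ thSet sat S :=
  fun _ hα => Set.Subset.trans h hα

lemma subset_cnsq (Γ : Set F) : Γ ⊆ cnsq sat Γ :=
  fun α hα => (mem_thSet_iff sat).2 (fun _ hv => hv α hα)

lemma subset_modSet_thSet (S : Set V) : S ⊆ modSet sat (thSet sat S) :=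
  fun v hv α hα => ((mem_thSet_iff sat).1 hα) v hv

lemma modSet_cnsq (Γ : Set F) : modSet sat (cnsq sat Γ) = modSet sat Γ :=
  Set.Subset.antisymm (modSet_anti sat (subset_cnsq sat Γ)) (subset_modSet_thSet sat _)

lemma cnsq_thSet (S : Set V) : cnsq sat (thSet sat S) = thSet sat S :=
  Set.Subset.antisymm (thSet_anti sat (subset_modSet_thSet sat S)) (subset_cnsq sat _)

lemma modSet_union (Γ Δ : Set F) :
    modSet sat (Γ ∪ Δ) = modSet sat Γ ∩ modSet sat Δ := by
  ext v
  constructor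
  · intro h
    exact ⟨fun α hα => h α (Or.inl hα), fun α hα => h α (Or.inr hα)⟩
  · rintro ⟨h1, h2⟩ α (hα | hα)
    · exact h1 α hα
    · exact h2 α hα

lemma modSet_thSet_of_def {A : Set V} (hA : A ∈ defFam sat) :
    modSet sat (thSet sat A) = A := by
  obtain ⟨Γ, rfl⟩ := hA
  exact modSet_cnsq sat Γ

end Aux

/-- `|~` is a DP pivotal consequence relation iff it satisfies
`(|~0)`, `(|~1)`, `(|~2)`, and `(|~3)`. -/
theorem stmt3 {F V : Type*} (sat : V → F → Prop) (rel : Set F → F → Prop) :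
    isPivotalDP sat rel ↔
      ((∀ Γ Δ : Set F, cnsq sat Γ = cnsq sat Δ → relC rel Γ = relC rel Δ) ∧
        (∀ Γ : Set F, relC rel Γ = cnsq sat (relC rel Γ)) ∧
        (∀ Γ : Set F, Γ ⊆ relC rel Γ) ∧
        (∀ Γ Δ : Set F, relC rel Γ ⊆ cnsq sat (relC rel Δ ∪ Γ))) := by
  constructor
  · rintro ⟨μ, hsub, hsc, hdp, hrep⟩
    -- key: relC rel Γ = thSet sat (μ (modSet sat Γ))
    have key : ∀ Γ : Set F, relC rel Γ = thSet sat (μ (modSet sat Γ)) := by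
      intro Γ
      ext α
      exact hrep Γ α
    have hdefΓ : ∀ Γ : Set F, modSet sat Γ ∈ defFam sat := fun Γ => ⟨Γ, rfl⟩
    refine ⟨?_, ?_, ?_, ?_⟩
    · intro Γ Δ h
      have hmod : modSet sat Γ = modSet sat Δ := by
        rw [← modSet_cnsq sat Γ, ← modSet_cnsq sat Δ, h]
      rw [key, key, hmod]
    · intro Γ
      rw [key, cnsq_thSet]
    · intro Γ α hα
      show rel Γ α
      rw [hrep]
      exact fun v hv => (fun β hβ => by cases hβ; exact (hsub _ (hdefΓ Γ) hv) α hα)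
    · intro Γ Δ
      rw [key Γ, key Δ]
      have : modSet sat (thSet sat (μ (modSet sat Δ)) ∪ Γ)
          = μ (modSet sat Δ) ∩ modSet sat Γ := by
        rw [modSet_union, modSet_thSet_of_def sat (hdp _ (hdefΓ Δ))]
      unfold cnsq
      rw [this]
      exact thSet_anti sat (hsc _ (hdefΓ Γ) _ (hdefΓ Δ))
  · rintro ⟨h0, h1, h2, h3⟩
    refine ⟨fun A => modSet sat (relC rel (thSet sat A)), ?_, ?_, ?_, ?_⟩
    · -- μ A ⊆ A
      rintro A ⟨Γ, rfl⟩
      have hμ : relC rel (thSet sat (modSet sat Γ)) = relC rel Γ :=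
        h0 _ _ (by rw [show thSet sat (modSet sat Γ) = cnsq sat Γ from rfl,
          show cnsq sat (cnsq sat Γ) = cnsq sat Γ from cnsq_thSet sat _])
      show modSet sat (relC rel (thSet sat (modSet sat Γ))) ⊆ modSet sat Γ
      rw [hμ]
      exact modSet_anti sat (h2 Γ)
    · -- strong coherence
      rintro A ⟨Γ, rfl⟩ B ⟨Δ, rfl⟩
      have hμ : ∀ Θ : Set F, relC rel (thSet sat (modSet sat Θ)) = relC rel Θ := by
        intro Θ
        exact h0 _ _ (by rw [show thSet sat (modSet sat Θ) = cnsq sat Θ from rfl,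
          show cnsq sat (cnsq sat Θ) = cnsq sat Θ from cnsq_thSet sat _])
      show modSet sat (relC rel (thSet sat (modSet sat Δ))) ∩ modSet sat Γ ⊆
        modSet sat (relC rel (thSet sat (modSet sat Γ)))
      rw [hμ Γ, hμ Δ, ← modSet_union]
      have := modSet_anti sat (h3 Γ Δ)
      rw [modSet_cnsq] at this
      exact this
    · rintro A ⟨Γ, rfl⟩
      exact ⟨_, rfl⟩
    · intro Γ α
      have hμ : relC rel (thSet sat (modSet sat Γ)) = relC rel Γ :=
        h0 _ _ (by rw [show thSet sat (modSet sat Γ) = cnsq sat Γ from rfl,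
          show cnsq sat (cnsq sat Γ) = cnsq sat Γ from cnsq_thSet sat _])
      show rel Γ α ↔ modSet sat (relC rel (thSet sat (modSet sat Γ))) ⊆ modSet sat {α}
      rw [hμ]
      constructor
      · intro h v hv β hβ
        cases hβ
        exact hv α h
      · intro h
        have : α ∈ cnsq sat (relC rel Γ) := h
        rw [← h1 Γ] at this
        exact this
end

section
/- Let 𝒱 be a set, 𝐕, 𝐖, 𝐗 ⊆ P(𝒱), f a function from 𝐕 to 𝐖, and μ a strongly coherent choice function from 𝐕 to 𝐗 such that for all V ∈ 𝐕, f(V) = Mod(Th(μ(V))). Then for all V ∈ 𝐕, f(V) = Mod(Th(ν_f(V))). -/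
/-- The choice function `ν_f` defined from a function `f` on the family `𝐕`. -/
def nuF {V : Type*} (VV : Set (Set V)) (f : Set V → Set V) : Set V → Set V :=
  fun A => {v ∈ A | ∀ B ∈ VV, v ∈ B → v ∈ f B}

/-- If `μ` is a strongly coherent choice function from `𝐕` to `𝐗` and
`f(V) = Mod(Th(μ(V)))` for all `V ∈ 𝐕`, then `f(V) = Mod(Th(ν_f(V)))` for all `V ∈ 𝐕`. -/
theorem stmt5 {F V : Type*} (sat : V → F → Prop)
    (VV WW XX : Set (Set V)) (f μ : Set V → Set V)
    (hf : ∀ A ∈ VV, f A ∈ WW)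
    (hμmem : ∀ A ∈ VV, μ A ∈ XX)
    (hch : ∀ A ∈ VV, μ A ⊆ A)
    (hsc : ∀ A ∈ VV, ∀ B ∈ VV, μ B ∩ A ⊆ μ A)
    (hfμ : ∀ A ∈ VV, f A = modSet sat (thSet sat (μ A))) :
    ∀ A ∈ VV, f A = modSet sat (thSet sat (nuF VV f A)) := by
  -- S ⊆ Mod(Th S)
  have hincl : ∀ S : Set V, S ⊆ modSet sat (thSet sat S) := by
    intro S v hv α hα
    exact hα hv α rfl
  intro A hA
  -- μ A ⊆ ν_f A
  have h1 : μ A ⊆ nuF VV f A := by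
    intro v hv
    refine ⟨hch A hA hv, fun B hB hvB => ?_⟩
    have : v ∈ μ B := hsc B hB A hA ⟨hv, hvB⟩
    rw [hfμ B hB]
    exact hincl (μ B) this
  -- ν_f A ⊆ f A
  have h2 : nuF VV f A ⊆ f A := fun v hv => hv.2 A hA hv.1
  apply Set.Subset.antisymm
  · -- f A = Mod(Th μA) ⊆ Mod(Th νA) since Th νA ⊆ Th μA
    rw [hfμ A hA]
    intro v hv α hα
    exact hv α (fun w hw => hα (h1 hw))
  · -- Mod(Th νA) ⊆ Mod(Th μA) = f A since νA ⊆ f A = Mod(Th μA), so Th μA ⊆ Th νA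
    rw [hfμ A hA]
    intro v hv α hα
    refine hv α (fun w hw => ?_)
    have : w ∈ modSet sat (thSet sat (μ A)) := by
      rw [← hfμ A hA]; exact h2 hw
    exact fun β hβ => hβ ▸ this α hα
end

section
/- Let ⟨F, 𝒱, ⊨⟩ be a semantic structure satisfying (A0) (Mod(F) = ∅), let 𝐕, 𝐖, 𝐗 ⊆ P(𝒱) with D ⊆ 𝐕, let f be a function from 𝐕 to 𝐖, and let μ be a strongly coherent, universe-codefinable choice function from 𝐕 to 𝐗 such that for all V ∈ 𝐕, f(V) = Mod(Th(μ(V))). Then ν_f(𝒱) = μ(𝒱). -/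
/-- Under `(A0)` and `D ⊆ 𝐕`, if `μ` is a strongly coherent,
universe-codefinable choice function from `𝐕` to `𝐗` and `f(V) = Mod(Th(μ(V)))`
for all `V ∈ 𝐕`, then `ν_f(𝒱) = μ(𝒱)`. -/
theorem stmt6 {F V : Type*} (sat : V → F → Prop)
    (hA0 : modSet sat (Set.univ : Set F) = ∅)
    (VV WW XX : Set (Set V)) (hD : defFam sat ⊆ VV)
    (f μ : Set V → Set V)
    (hf : ∀ A ∈ VV, f A ∈ WW)
    (hμmem : ∀ A ∈ VV, μ A ∈ XX)
    (hch : ∀ A ∈ VV, μ A ⊆ A)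
    (hsc : ∀ A ∈ VV, ∀ B ∈ VV, μ B ∩ A ⊆ μ A)
    (huc : Set.univ \ μ Set.univ ∈ defFam sat)
    (hfμ : ∀ A ∈ VV, f A = modSet sat (thSet sat (μ A))) :
    nuF VV f Set.univ = μ Set.univ := by
  have hunivV : (Set.univ : Set V) ∈ VV := hD ⟨∅, by ext v; simp [modSet]⟩
  have hC : Set.univ \ μ Set.univ ∈ VV := hD huc
  ext v
  constructor
  · rintro ⟨-, hv⟩
    by_contra hvμ
    have hvC : v ∈ Set.univ \ μ Set.univ := ⟨trivial, hvμ⟩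
    have hvf := hv _ hC hvC
    rw [hfμ _ hC] at hvf
    have hμC : μ (Set.univ \ μ Set.univ) = ∅ := by
      apply Set.eq_empty_of_subset_empty
      intro w hw
      have h1 : w ∈ μ Set.univ := hsc _ hunivV _ hC ⟨hw, trivial⟩
      have h2 : w ∈ Set.univ \ μ Set.univ := hch _ hC hw
      exact absurd h1 h2.2
    rw [hμC] at hvf
    have : v ∈ modSet sat (Set.univ : Set F) := by
      intro α _
      exact hvf α (fun x hx => absurd hx (Set.notMem_empty x))
    rw [hA0] at this
    exact this
  · intro hv
    refine ⟨trivial, fun B hB hvB => ?_⟩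
    rw [hfμ _ hB]
    have hvμB : v ∈ μ B := hsc _ hB _ hunivV ⟨hv, hvB⟩
    intro α hα
    exact hα hvμB α rfl
end

section
/- Let ⟨F, 𝒱, ⊨⟩ be a semantic structure and |~ a relation on P(F) × F. Then |~ is a pivotal consequence relation if and only if |~ satisfies condition (|~4): for all Γ ⊆ F, C_|~(Γ) = Th({v ∈ Mod(Γ) : for all Δ ⊆ F, if v ∈ Mod(Δ) then v ∈ Mod(C_|~(Δ))}). -/
/-- `|~` is a pivotal consequence relation: there is a strongly coherent choice
function `μ` from `D` to `P(𝒱)` defining it. -/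
def isPivotal {F V : Type*} (sat : V → F → Prop) (rel : Set F → F → Prop) : Prop :=
  ∃ μ : Set V → Set V,
    (∀ A ∈ defFam sat, μ A ⊆ A) ∧
    (∀ A ∈ defFam sat, ∀ B ∈ defFam sat, μ B ∩ A ⊆ μ A) ∧
    (∀ (Γ : Set F) (α : F), rel Γ α ↔ μ (modSet sat Γ) ⊆ modSet sat {α})

/-- `|~` is a pivotal consequence relation iff it satisfies `(|~4)`. -/
theorem stmt8 {F V : Type*} (sat : V → F → Prop) (rel : Set F → F → Prop) :
    isPivotal sat rel ↔
      ∀ Γ : Set F, relC rel Γ =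
        thSet sat {v ∈ modSet sat Γ |
          ∀ Δ : Set F, v ∈ modSet sat Δ → v ∈ modSet sat (relC rel Δ)} := by
  constructor
  · rintro ⟨μ, hsub, hsc, hdef⟩ Γ
    ext α
    simp only [relC, thSet, Set.mem_setOf_eq]
    constructor
    · -- C(Γ) ⊆ Th(good models of Γ)
      intro hα v hv
      obtain ⟨hvΓ, hgood⟩ := hv
      have := hgood Γ hvΓ
      intro β hβ
      subst hβ
      exact this β hα
    · -- conversely
      intro h
      rw [hdef]
      intro v hv
      apply h
      refine ⟨hsub _ ⟨Γ, rfl⟩ hv, ?_⟩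
      intro Δ hvΔ
      have hvμΔ : v ∈ μ (modSet sat Δ) :=
        hsc _ ⟨Δ, rfl⟩ _ ⟨Γ, rfl⟩ ⟨hv, hvΔ⟩
      intro β hβ
      have := (hdef Δ β).mp hβ hvμΔ
      exact this β rfl
  · intro h4
    refine ⟨fun A => {v ∈ A | ∀ Δ : Set F, v ∈ modSet sat Δ → v ∈ modSet sat (relC rel Δ)},
      fun A _ v hv => hv.1, fun A _ B _ v hv => ⟨hv.2, hv.1.2⟩, fun Γ α => ?_⟩
    constructor
    · intro hΓα v hv
      have : α ∈ relC rel Γ := hΓα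
      rw [h4 Γ] at this
      exact this hv
    · intro hsub
      have : α ∈ relC rel Γ := by
        rw [h4 Γ]
        exact hsub
      exact this
end

section
/- Let ⟨F, 𝒱, ⊨⟩ be a semantic structure satisfying (A0) (Mod(F) = ∅) and |~ a relation on P(F) × F. Then |~ is a universe-codefinable pivotal consequence relation if and only if |~ satisfies (|~4): for all Γ ⊆ F, C_|~(Γ) = Th({v ∈ Mod(Γ) : for all Δ ⊆ F, if v ∈ Mod(Δ) then v ∈ Mod(C_|~(Δ))}), and (|~5): 𝒱 \ {v ∈ 𝒱 : for all Δ ⊆ F, if v ∈ Mod(Δ) then v ∈ Mod(C_|~(Δ))} ∈ D. -/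
/-- `|~` is a universe-codefinable pivotal consequence relation: there is a strongly
coherent, universe-codefinable choice function `μ` from `D` to `P(𝒱)` defining it. -/
def isPivotalUC {F V : Type*} (sat : V → F → Prop) (rel : Set F → F → Prop) : Prop :=
  ∃ μ : Set V → Set V,
    (∀ A ∈ defFam sat, μ A ⊆ A) ∧
    (∀ A ∈ defFam sat, ∀ B ∈ defFam sat, μ B ∩ A ⊆ μ A) ∧
    Set.univ \ μ Set.univ ∈ defFam sat ∧
    (∀ (Γ : Set F) (α : F), rel Γ α ↔ μ (modSet sat Γ) ⊆ modSet sat {α})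

/-- Under `(A0)`, `|~` is a UC pivotal consequence relation iff it
satisfies `(|~4)` and `(|~5)`. -/
theorem stmt9 {F V : Type*} (sat : V → F → Prop)
    (hA0 : modSet sat (Set.univ : Set F) = ∅)
    (rel : Set F → F → Prop) :
    isPivotalUC sat rel ↔
      ((∀ Γ : Set F, relC rel Γ =
          thSet sat {v ∈ modSet sat Γ |
            ∀ Δ : Set F, v ∈ modSet sat Δ → v ∈ modSet sat (relC rel Δ)}) ∧
        Set.univ \ {v : V |
          ∀ Δ : Set F, v ∈ modSet sat Δ → v ∈ modSet sat (relC rel Δ)} ∈ defFam sat) := by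
  set N : Set V := {v : V | ∀ Δ : Set F, v ∈ modSet sat Δ → v ∈ modSet sat (relC rel Δ)}
    with hNdef
  have hU : modSet sat (∅ : Set F) = (Set.univ : Set V) := by
    ext v; simp [modSet]
  have hsep : ∀ Γ : Set F,
      {v ∈ modSet sat Γ | ∀ Δ : Set F, v ∈ modSet sat Δ → v ∈ modSet sat (relC rel Δ)}
        = modSet sat Γ ∩ N := by
    intro Γ; ext v; simp [hNdef, Set.mem_sep_iff, Set.mem_inter_iff]
  constructor
  · rintro ⟨μ, hsub, hSC, hUC, hdef⟩
    -- N ⊆ μ univ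
    have hNmu : N ⊆ μ Set.univ := by
      obtain ⟨Sg, hS⟩ := hUC
      intro v hv
      by_contra hvnot
      have hvS : v ∈ modSet sat Sg := by rw [hS]; exact ⟨Set.mem_univ v, hvnot⟩
      have hμS : μ (modSet sat Sg) = ∅ := by
        have h1 : μ (modSet sat Sg) ⊆ μ Set.univ := by
          intro w hw
          exact hSC Set.univ ⟨∅, hU⟩ (modSet sat Sg) ⟨Sg, rfl⟩ ⟨hw, Set.mem_univ w⟩
        have h2 : μ (modSet sat Sg) ⊆ modSet sat Sg := hsub _ ⟨Sg, rfl⟩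
        ext w
        simp only [Set.mem_empty_iff_false, iff_false]
        intro hw
        exact ((hS ▸ h2 hw).2) (h1 hw)
      have hall : ∀ α : F, α ∈ relC rel Sg := by
        intro α
        rw [relC, Set.mem_setOf_eq, hdef, hμS]
        exact Set.empty_subset _
      have hvC : v ∈ modSet sat (relC rel Sg) := hv Sg hvS
      have hvuniv : v ∈ modSet sat (Set.univ : Set F) := by
        intro α _; exact hvC α (hall α)
      rw [hA0] at hvuniv
      exact hvuniv
    -- μ (modSet Γ) = modSet Γ ∩ N
    have hmuN : ∀ Γ : Set F, μ (modSet sat Γ) = modSet sat Γ ∩ N := by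
      intro Γ
      apply Set.Subset.antisymm
      · intro v hv
        refine ⟨hsub _ ⟨Γ, rfl⟩ hv, ?_⟩
        intro Δ hvΔ
        have hv2 : v ∈ μ (modSet sat Δ) :=
          hSC _ ⟨Δ, rfl⟩ _ ⟨Γ, rfl⟩ ⟨hv, hvΔ⟩
        intro α hα
        have := (hdef Δ α).mp hα hv2
        exact this α rfl
      · rintro v ⟨hvΓ, hvN⟩
        have hvmu : v ∈ μ Set.univ := hNmu hvN
        exact hSC _ ⟨Γ, rfl⟩ Set.univ ⟨∅, hU⟩ ⟨hvmu, hvΓ⟩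
    have hmuUniv : μ Set.univ = N := by
      have := hmuN ∅
      rw [hU] at this
      rw [this, Set.univ_inter]
    constructor
    · intro Γ
      ext α
      rw [hsep Γ]
      constructor
      · intro hα
        exact fun v hv => (hmuN Γ ▸ (hdef Γ α).mp hα) hv
      · intro hα
        exact (hdef Γ α).mpr (by rw [hmuN Γ]; exact hα)
    · rw [← hmuUniv]; exact hUC
  · rintro ⟨h4, h5⟩
    refine ⟨fun A => A ∩ N, fun A _ => Set.inter_subset_left,
      fun A _ B _ => fun v hv => ⟨hv.2, hv.1.2⟩, ?_, ?_⟩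
    · show Set.univ \ (Set.univ ∩ N) ∈ defFam sat
      rw [Set.univ_inter]; exact h5
    · intro Γ α
      have : α ∈ relC rel Γ ↔ rel Γ α := Iff.rfl
      rw [← this, h4 Γ, hsep Γ]
      exact Iff.rfl
end
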